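/- Let G be a finite simple graph, let x be a vertex, and let P be a simple path in G − x visiting three distinct neighbours v₁, v₂, v₃ of x in this order along P. If there exists a path Q in G − {v₂, x} from v₁ to v₃, then G contains a K₄ minor model: four pairwise disjoint nonempty vertex sets, each inducing a connected subgraph of G, pairwise joined by an edge of G. -/

import Mathlib

/-!
Split `P` at `v₂` into the part `L` before `v₂` and the part `R` after it, so that `v₁ ∈ L` and
`v₃ ∈ R`. Follow `Q` from `v₁` up to the vertex just before it first enters `R`: together with `L`
this gives a connected set `A` disjoint from `R` and joined to it by an edge. Then `{v₂}`, `A`, `R`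
is a `K₃` model avoiding `x`, with `v₁ ∈ A` and `v₃ ∈ R`, so `x` is adjacent to all three branch
sets and `{x}` extends it to a `K₄` model.
-/

namespace List

variable {α : Type*}

theorem mem_right_of_pair_sublist_append_cons {b c : α} {s t : List α} (hb : b ∉ s)
    (h : [b, c] <+ s ++ b :: t) : c ∈ t := by
  induction s with
  | nil => exact (cons_sublist_cons.mp h).subset (mem_singleton_self c)
  | cons x s ih =>
    rcases sublist_cons_iff.mp h with h | ⟨r, hr, -⟩
    · exact ih (fun hs => hb (mem_cons_of_mem x hs)) h
    · obtain ⟨rfl, -⟩ := cons_eq_cons.mp hr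
      exact absurd mem_cons_self hb

theorem mem_left_of_pair_sublist_append_cons {a b : α} {s t : List α} (hb : b ∉ t)
    (h : [a, b] <+ s ++ b :: t) : a ∈ s := by
  have h' : [b, a] <+ t.reverse ++ b :: s.reverse := by simpa using h.reverse
  exact mem_reverse.mp (mem_right_of_pair_sublist_append_cons (mt mem_reverse.mp hb) h')

end List

namespace SimpleGraph

variable {V : Type*} {G : SimpleGraph V}

structure IsCliqueMinorModel (G : SimpleGraph V) {n : ℕ} (W : Fin n → Set V) : Prop where
  nonempty : ∀ i, (W i).Nonempty
  connected : ∀ i, (G.induce (W i)).Connected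
  disjoint : ∀ i j, i ≠ j → Disjoint (W i) (W j)
  adj : ∀ i j, i ≠ j → ∃ u ∈ W i, ∃ w ∈ W j, G.Adj u w

theorem isCliqueMinorModel_singleton {X : Set V} (hX : (G.induce X).Connected) :
    G.IsCliqueMinorModel ![X] where
  nonempty := Fin.cases (Set.nonempty_coe_sort.mp hX.nonempty) finZeroElim
  connected := Fin.cases hX finZeroElim
  disjoint i j hij := absurd (Subsingleton.elim i j) hij
  adj i j hij := absurd (Subsingleton.elim i j) hij

theorem IsCliqueMinorModel.vecCons {n : ℕ} {W : Fin n → Set V} (hW : G.IsCliqueMinorModel W)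
    {X : Set V} (hX : (G.induce X).Connected) (hXW : ∀ i, Disjoint X (W i))
    (hadj : ∀ i, ∃ u ∈ X, ∃ w ∈ W i, G.Adj u w) :
    G.IsCliqueMinorModel (Matrix.vecCons X W) where
  nonempty := Fin.cases (Set.nonempty_coe_sort.mp hX.nonempty) hW.nonempty
  connected := Fin.cases hX hW.connected
  disjoint i j hij := by
    cases i using Fin.cases <;> cases j using Fin.cases
    · exact absurd rfl hij
    · exact hXW _
    · exact (hXW _).symm
    · exact hW.disjoint _ _ (by simpa using hij)
  adj i j hij := by
    cases i using Fin.cases <;> cases j using Fin.cases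
    · exact absurd rfl hij
    · exact hadj _
    · obtain ⟨u, hu, w, hw, huw⟩ := hadj ‹_›
      exact ⟨w, hw, u, hu, huw.symm⟩
    · exact hW.adj _ _ (by simpa using hij)

theorem IsCliqueMinorModel.vecCons_singleton {n : ℕ} {W : Fin n → Set V}
    (hW : G.IsCliqueMinorModel W) {x : V} (hx : ∀ i, x ∉ W i)
    (hadj : ∀ i, ∃ w ∈ W i, G.Adj x w) :
    G.IsCliqueMinorModel (Matrix.vecCons {x} W) := by
  refine hW.vecCons ?_ (fun i => Set.disjoint_singleton_left.mpr (hx i)) fun i => ⟨x, rfl, hadj i⟩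
  rw [induce_singleton_eq_top]
  exact connected_top

namespace Walk

theorem exists_walk_outside_adj_mem {S : Set V} {u v : V} (q : G.Walk u v) (hu : u ∉ S)
    (hv : v ∈ S) : ∃ t, ∃ s ∈ S, G.Adj t s ∧
      ∃ q' : G.Walk u t, (∀ y ∈ q'.support, y ∉ S) ∧ q'.support ⊆ q.support := by
  induction q with
  | nil => exact absurd hv hu
  | @cons u w v huw q ih =>
    by_cases hw : w ∈ S
    · exact ⟨u, w, hw, huw, nil, by simpa using hu, by simp⟩
    · obtain ⟨t, s, hs, hts, q', hq'S, hq'q⟩ := ih hw hv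
      refine ⟨t, s, hs, hts, cons huw q', ?_, ?_⟩
      · simpa [hu] using hq'S
      · simpa using List.cons_subset_cons u hq'q

theorem exists_support_eq_append_cons_of_sublist {a b v₁ v₂ v₃ : V} (P : G.Walk a b)
    (hP : P.support.Nodup) (h : [v₁, v₂, v₃].Sublist P.support) :
    ∃ (l : V) (L : G.Walk a l) (r : V) (R : G.Walk r b), G.Adj l v₂ ∧ G.Adj v₂ r ∧
      P.support = L.support ++ v₂ :: R.support ∧ v₁ ∈ L.support ∧ v₃ ∈ R.support := by
  classical
  have hv₂ : v₂ ∈ P.support := h.subset (by simp)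
  set L := P.takeUntil v₂ hv₂
  set R := P.dropUntil v₂ hv₂
  have hsplit : P.support = L.support.dropLast ++ v₂ :: R.support.tail := by
    rw [R.cons_tail_support, ← support_append_eq_support_dropLast_append, take_spec]
  rw [hsplit] at hP h
  have hv₂LR : v₂ ∉ L.support.dropLast ++ R.support.tail :=
    (List.nodup_cons.mp (List.nodup_middle.mp hP)).1
  have hv₁ : v₁ ∈ L.support.dropLast :=
    List.mem_left_of_pair_sublist_append_cons (fun h => hv₂LR (List.mem_append_right _ h))
      ((by simp : [v₁, v₂].Sublist [v₁, v₂, v₃]).trans h)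
  have hv₃ : v₃ ∈ R.support.tail :=
    List.mem_right_of_pair_sublist_append_cons (fun h => hv₂LR (List.mem_append_left _ h))
      ((List.sublist_cons_self _ _).trans h)
  have hL : ¬ L.Nil := fun hn => by simp [nil_iff_support_eq.mp hn] at hv₁
  have hR : ¬ R.Nil := fun hn => by simp [nil_iff_support_eq.mp hn] at hv₃
  simp only [← support_dropLast hL, ← support_tail_of_not_nil _ hR] at hsplit hv₁ hv₃
  exact ⟨_, L.dropLast, _, R.tail, adj_penultimate hL, adj_snd hR, hsplit, hv₁, hv₃⟩

end Walk

theorem exists_isCliqueMinorModel_three_of_sublist_support {a b v₁ v₂ v₃ : V} (P : G.Walk a b)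
    (hP : P.IsPath) (horder : [v₁, v₂, v₃].Sublist P.support) (Q : G.Walk v₁ v₃)
    (hv₂Q : v₂ ∉ Q.support) :
    ∃ A B : Set V, G.IsCliqueMinorModel ![{v₂}, A, B] ∧ v₁ ∈ A ∧ v₃ ∈ B ∧
      ∀ y ∈ A ∪ B, y ∈ P.support ∨ y ∈ Q.support := by
  obtain ⟨l, L, r, R, hl, hr, hsupp, hv₁L, hv₃R⟩ :=
    P.exists_support_eq_append_cons_of_sublist hP.support_nodup horder
  have hnd := hsupp ▸ hP.support_nodup
  have hv₂LR : v₂ ∉ L.support ++ R.support := (List.nodup_cons.mp (List.nodup_middle.mp hnd)).1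
  have hLR : ∀ y ∈ L.support, y ∉ R.support := fun y hyL hyR =>
    List.disjoint_of_nodup_append hnd hyL (List.mem_cons_of_mem _ hyR)
  obtain ⟨t, s, hsR, hts, Q', hQ'R, hQ'Q⟩ :=
    Q.exists_walk_outside_adj_mem (S := {y | y ∈ R.support}) (hLR v₁ hv₁L) hv₃R
  set A : Set V := {y | y ∈ L.support} ∪ {y | y ∈ Q'.support}
  set B : Set V := {y | y ∈ R.support}
  have hA : (G.induce A).Connected :=
    induce_union_connected L.connected_induce_support.preconnected
      Q'.connected_induce_support.preconnected ⟨v₁, hv₁L, Q'.start_mem_support⟩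
  have hAB : Disjoint A B := by
    rw [Set.disjoint_left]
    rintro y (hy | hy)
    exacts [hLR y hy, hQ'R y hy]
  have hAB_model : G.IsCliqueMinorModel ![A, B] :=
    (isCliqueMinorModel_singleton R.connected_induce_support).vecCons hA
      (Fin.forall_fin_one.mpr hAB)
      (Fin.forall_fin_one.mpr ⟨t, Or.inr Q'.end_mem_support, s, hsR, hts⟩)
  refine ⟨A, B, hAB_model.vecCons_singleton ?_ ?_, Or.inl hv₁L, hv₃R, ?_⟩
  · refine Fin.forall_fin_two.mpr ⟨?_, fun h => hv₂LR (List.mem_append_right _ h)⟩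
    rintro (h | h)
    exacts [hv₂LR (List.mem_append_left _ h), hv₂Q (hQ'Q h)]
  · exact Fin.forall_fin_two.mpr
      ⟨⟨l, Or.inl L.end_mem_support, hl.symm⟩, ⟨r, R.start_mem_support, hr⟩⟩
  · rw [hsupp]
    rintro y ((hy | hy) | hy)
    · exact Or.inl (List.mem_append_left _ hy)
    · exact Or.inr (hQ'Q hy)
    · exact Or.inl (List.mem_append_right _ (List.mem_cons_of_mem _ hy))

end SimpleGraph

theorem x_path_nonseparator_gives_K4_minor_general
    {V : Type*} (G : SimpleGraph V)
    (x : V) {a b : V} (P : G.Walk a b) (hP : P.IsPath) (hxP : x ∉ P.support)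
    (v₁ v₂ v₃ : V)
    (h₁ : G.Adj x v₁) (h₂ : G.Adj x v₂) (h₃ : G.Adj x v₃)
    (horder : [v₁, v₂, v₃].Sublist P.support)
    (Q : G.Walk v₁ v₃) (hxQ : x ∉ Q.support) (hv₂Q : v₂ ∉ Q.support) :
    ∃ W : Fin 4 → Set V,
      (∀ i, (W i).Nonempty) ∧
      (∀ i, (G.induce (W i)).Connected) ∧
      (∀ i j, i ≠ j → Disjoint (W i) (W j)) ∧
      (∀ i j, i ≠ j → ∃ u ∈ W i, ∃ w ∈ W j, G.Adj u w) := by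
  obtain ⟨A, B, hK₃, hv₁A, hv₃B, hAB⟩ :=
    SimpleGraph.exists_isCliqueMinorModel_three_of_sublist_support P hP horder Q hv₂Q
  have hxAB : x ∉ A ∪ B := fun h => (hAB x h).elim hxP hxQ
  have hK₄ := hK₃.vecCons_singleton (x := x)
    (Fin.forall_fin_succ.mpr
      ⟨h₂.ne, Fin.forall_fin_two.mpr ⟨fun h => hxAB (Or.inl h), fun h => hxAB (Or.inr h)⟩⟩)
    (Fin.forall_fin_succ.mpr
      ⟨⟨v₂, rfl, h₂⟩, Fin.forall_fin_two.mpr ⟨⟨v₁, hv₁A, h₁⟩, ⟨v₃, hv₃B, h₃⟩⟩⟩)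
  exact ⟨_, hK₄.nonempty, hK₄.connected, hK₄.disjoint, hK₄.adj⟩

/-- If a simple path `P` avoiding `x` visits three neighbours `v₁, v₂, v₃` of `x` in this
order, and there is a path `Q` from `v₁` to `v₃` avoiding both `v₂` and `x`, then `G`
contains a `K₄` minor model. -/
theorem x_path_nonseparator_gives_K4_minor
    {V : Type*} [Fintype V] [DecidableEq V] (G : SimpleGraph V)
    (x : V) {a b : V} (P : G.Walk a b) (hP : P.IsPath) (hxP : x ∉ P.support)
    (v₁ v₂ v₃ : V)
    (h₁ : G.Adj x v₁) (h₂ : G.Adj x v₂) (h₃ : G.Adj x v₃)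
    (horder : [v₁, v₂, v₃].Sublist P.support)
    (Q : G.Walk v₁ v₃) (hxQ : x ∉ Q.support) (hv₂Q : v₂ ∉ Q.support) :
    ∃ W : Fin 4 → Set V,
      (∀ i, (W i).Nonempty) ∧
      (∀ i, (G.induce (W i)).Connected) ∧
      (∀ i j, i ≠ j → Disjoint (W i) (W j)) ∧
      (∀ i j, i ≠ j → ∃ u ∈ W i, ∃ w ∈ W j, G.Adj u w) :=
  x_path_nonseparator_gives_K4_minor_general G x P hP hxP v₁ v₂ v₃ h₁ h₂ h₃ horder Q hxQ hv₂Q
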